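/- Let N_φ, N_ψ ∈ ℂ, φₙ(x) = (N_φ/(2ⁿ √(n!))) Hₙ(sinh x) e^{−cosh²x}, ψₙ(x) = (2N_ψ/√(n!)) Hₙ(sinh x) cosh x. For h : ℝ → ℂ set h_{[−]}(s) = h(arsinh s) e^{s²/2}, h_{[+]}(s) = h(arsinh s) e^{−s²/2}/√(1+s²), and E_c = { h ∈ L²(ℝ) : h_{[−]} ∈ L²(ℝ) }. For z ∈ ℂ and g ∈ E_c define F_Φ(z)[g] = e^{−|z|²/2} Σ_{n≥0} (z̄ⁿ/√(n!)) ∫_ℝ conj(φₙ) g dx and F_Ψ(z)[g] = e^{−|z|²/2} Σ_{n≥0} (z̄ⁿ/√(n!)) ∫_ℝ conj(ψₙ) g dx. If (g_k) is a sequence in E_c and g ∈ E_c are such that ‖g_k − g‖₂ → 0 and ‖(g_k)_{[−]} − g_{[−]}‖₂ → 0, then for every z ∈ ℂ one has F_Φ(z)[g_k] → F_Φ(z)[g] and F_Ψ(z)[g_k] → F_Ψ(z)[g]; moreover ‖(g_k)_{[+]} − g_{[+]}‖₂ ≤ ‖(g_k)_{[−]} − g_{[−]}‖₂ → 0. -/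

import Mathlib

open MeasureTheory Filter

/-- The physicist's Hermite polynomials:
`H₀(y) = 1`, `Hₙ(y) = 2y H_{n−1}(y) − H_{n−1}′(y)`. -/
noncomputable def hermiteH : ℕ → ℝ → ℝ
  | 0 => fun _ => 1
  | n + 1 => fun y => 2 * y * hermiteH n y - deriv (hermiteH n) y

/-- `h_{[−]}(s) = h(arsinh s) e^{s²/2}`. -/
noncomputable def minusT (h : ℝ → ℂ) : ℝ → ℂ :=
  fun s => h (Real.arsinh s) * (Real.exp (s ^ 2 / 2) : ℂ)

/-- `h_{[+]}(s) = h(arsinh s) e^{−s²/2}/√(1+s²)`. -/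
noncomputable def plusT (h : ℝ → ℂ) : ℝ → ℂ :=
  fun s => h (Real.arsinh s) * (Real.exp (-s ^ 2 / 2) : ℂ) / (Real.sqrt (1 + s ^ 2) : ℂ)

/-- `E_c = { h ∈ L² : h_{[−]} ∈ L² }`. -/
def Ec : Set (ℝ → ℂ) :=
  {h | MemLp h 2 (volume : Measure ℝ) ∧ MemLp (minusT h) 2 (volume : Measure ℝ)}

/-!
Weight the coefficients of a polynomial by `√(2ᵏ k!)`: since `|y|ᵏ ≤ √(2ᵏ k!) e^{y²/4}`, this
weighted ℓ¹ norm bounds `|p(y)| e^{−y²/4}`, and the recursion `Hₙ₊₁ = 2y Hₙ − Hₙ'` multiplies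
it by at most `3√(2(n+1))`. Hence `|Hₙ(y)| ≤ 6ⁿ √n! e^{y²/4}`, so `‖φₙ‖₂ = O(3ⁿ)`; and the
substitution `s = sinh x` turns `⟨ψₙ, g⟩` into `⟨(ψₙ)_{[+]}, g_{[−]}⟩` with
`‖(ψₙ)_{[+]}‖₂ = O(6ⁿ)`. By Cauchy–Schwarz the series defining `F_Φ(z)[g]` and `F_Ψ(z)[g]`
are then dominated by `Σ (6|z|)ⁿ/√n!` times `‖g‖₂` resp. `‖g_{[−]}‖₂`, and they are linear
in `g`.
-/

open scoped ComplexConjugate Topology InnerProductSpace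

namespace BiCoherent

section Hermite

open Polynomial

noncomputable def hermitePoly : ℕ → ℝ[X]
  | 0 => 1
  | n + 1 => (2 : ℝ) • (X * hermitePoly n) - derivative (hermitePoly n)

lemma hermiteH_eq_eval (n : ℕ) : hermiteH n = fun y => (hermitePoly n).eval y := by
  induction n with
  | zero => funext y; simp [hermiteH, hermitePoly]
  | succ n ih =>
    funext y
    simp only [hermiteH, hermitePoly, ih, Polynomial.deriv, eval_sub, eval_smul, eval_mul, eval_X,
      smul_eq_mul]
    ring

lemma natDegree_hermitePoly_le (n : ℕ) : (hermitePoly n).natDegree ≤ n := by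
  induction n with
  | zero => simp [hermitePoly]
  | succ n ih =>
    refine (natDegree_sub_le _ _).trans (max_le ?_ ?_)
    · refine (natDegree_smul_le _ _).trans ?_
      exact (natDegree_mul_le).trans (by rw [natDegree_X]; omega)
    · exact (natDegree_derivative_le _).trans (by omega)

lemma continuous_hermiteH (n : ℕ) : Continuous (hermiteH n) := by
  rw [hermiteH_eq_eval]
  exact (hermitePoly n).continuous

noncomputable def hermiteWeight (k : ℕ) : ℝ := √(2 ^ k * k.factorial)

lemma hermiteWeight_nonneg (k : ℕ) : 0 ≤ hermiteWeight k := Real.sqrt_nonneg _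

lemma hermiteWeight_succ (k : ℕ) :
    hermiteWeight (k + 1) = √(2 * (k + 1)) * hermiteWeight k := by
  rw [hermiteWeight, hermiteWeight, ← Real.sqrt_mul (by positivity), Nat.factorial_succ]
  push_cast
  ring_nf

lemma abs_pow_le_hermiteWeight_mul_exp (y : ℝ) (k : ℕ) :
    |y| ^ k ≤ hermiteWeight k * Real.exp (y ^ 2 / 4) := by
  have h : (y ^ 2) ^ k ≤ 2 ^ k * k.factorial * Real.exp (y ^ 2 / 2) := by
    have := Real.pow_div_factorial_le_exp (x := y ^ 2 / 2) (by positivity) k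
    rw [div_pow, div_div, div_le_iff₀ (by positivity)] at this
    linarith
  calc |y| ^ k = √((y ^ 2) ^ k) := by
        rw [← pow_mul, mul_comm, pow_mul, Real.sqrt_sq_eq_abs, abs_pow]
    _ ≤ √(2 ^ k * k.factorial * Real.exp (y ^ 2 / 2)) := Real.sqrt_le_sqrt h
    _ = hermiteWeight k * Real.exp (y ^ 2 / 4) := by
        rw [Real.sqrt_mul (by positivity), hermiteWeight, ← Real.exp_half]
        ring_nf

noncomputable def weightedNorm (p : ℝ[X]) : ℝ := p.sum fun k a => |a| * hermiteWeight k

lemma weightedNorm_eq_sum_range (p : ℝ[X]) {N : ℕ} (hN : p.natDegree < N) :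
    weightedNorm p = ∑ k ∈ Finset.range N, |p.coeff k| * hermiteWeight k :=
  p.sum_over_range' (by simp) N hN

lemma abs_eval_le_weightedNorm_mul_exp (p : ℝ[X]) (y : ℝ) :
    |p.eval y| ≤ weightedNorm p * Real.exp (y ^ 2 / 4) := by
  rw [eval_eq_sum, weightedNorm_eq_sum_range p (Nat.lt_succ_self _),
    p.sum_over_range (by simp), Finset.sum_mul]
  refine (Finset.abs_sum_le_sum_abs _ _).trans (Finset.sum_le_sum fun k _ => ?_)
  rw [abs_mul, abs_pow, mul_assoc]
  exact mul_le_mul_of_nonneg_left (abs_pow_le_hermiteWeight_mul_exp y k) (abs_nonneg _)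

lemma weightedNorm_sub_le (p q : ℝ[X]) :
    weightedNorm (p - q) ≤ weightedNorm p + weightedNorm q := by
  set N := p.natDegree + q.natDegree + 1
  have hpq : (p - q).natDegree < N := (natDegree_sub_le p q).trans_lt (by omega)
  rw [weightedNorm_eq_sum_range _ hpq, weightedNorm_eq_sum_range p (by omega : p.natDegree < N),
    weightedNorm_eq_sum_range q (by omega : q.natDegree < N), ← Finset.sum_add_distrib]
  refine Finset.sum_le_sum fun k _ => ?_
  rw [coeff_sub, ← add_mul]
  exact mul_le_mul_of_nonneg_right (abs_sub _ _) (hermiteWeight_nonneg k)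

lemma weightedNorm_smul (a : ℝ) (p : ℝ[X]) : weightedNorm (a • p) = |a| * weightedNorm p := by
  have hp : p.natDegree < p.natDegree + 1 := Nat.lt_succ_self _
  rw [weightedNorm_eq_sum_range _ ((natDegree_smul_le a p).trans_lt hp),
    weightedNorm_eq_sum_range p hp, Finset.mul_sum]
  simp only [coeff_smul, smul_eq_mul, abs_mul, mul_assoc]

lemma weightedNorm_X_mul_le {p : ℝ[X]} {N : ℕ} (hp : p.natDegree < N) :
    weightedNorm (X * p) ≤ √(2 * N) * weightedNorm p := by
  have hXp : (X * p).natDegree < N + 1 := natDegree_mul_le.trans_lt (by rw [natDegree_X]; omega)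
  rw [weightedNorm_eq_sum_range _ hXp, weightedNorm_eq_sum_range p hp, Finset.sum_range_succ',
    coeff_X_mul_zero, abs_zero, zero_mul, add_zero, Finset.mul_sum]
  refine Finset.sum_le_sum fun k hk => ?_
  have hkN : (k : ℝ) + 1 ≤ N := by exact_mod_cast Finset.mem_range.mp hk
  rw [coeff_X_mul, hermiteWeight_succ, mul_left_comm]
  exact mul_le_mul_of_nonneg_right (Real.sqrt_le_sqrt (by linarith))
    (mul_nonneg (abs_nonneg _) (hermiteWeight_nonneg k))

lemma weightedNorm_derivative_le {p : ℝ[X]} {N : ℕ} (hp : p.natDegree < N) :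
    weightedNorm (derivative p) ≤ √(2 * N) * weightedNorm p := by
  have hp' : (derivative p).natDegree < N := (natDegree_derivative_le p).trans_lt (by omega)
  rw [weightedNorm_eq_sum_range _ hp',
    weightedNorm_eq_sum_range p (hp.trans (Nat.lt_succ_self N)), Finset.sum_range_succ' _ N,
    mul_add, Finset.mul_sum]
  refine le_add_of_le_of_nonneg (Finset.sum_le_sum fun k hk => ?_)
    (mul_nonneg (Real.sqrt_nonneg _) (mul_nonneg (abs_nonneg _) (hermiteWeight_nonneg 0)))
  have hkN : (k : ℝ) + 1 ≤ N := by exact_mod_cast Finset.mem_range.mp hk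
  have hk2 : (k : ℝ) + 1 ≤ √(2 * N) * √(2 * (k + 1)) := by
    calc (k : ℝ) + 1 ≤ √(2 * (k + 1)) * √(2 * (k + 1)) := by
          rw [Real.mul_self_sqrt (by positivity)]; linarith
      _ ≤ √(2 * N) * √(2 * (k + 1)) := by gcongr
  rw [coeff_derivative, hermiteWeight_succ, abs_mul, abs_of_pos (by positivity : (0 : ℝ) < k + 1)]
  calc |p.coeff (k + 1)| * (k + 1) * hermiteWeight k
      = |p.coeff (k + 1)| * hermiteWeight k * (k + 1) := by ring
    _ ≤ |p.coeff (k + 1)| * hermiteWeight k * (√(2 * N) * √(2 * (k + 1))) := by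
        gcongr
        exact mul_nonneg (abs_nonneg _) (hermiteWeight_nonneg k)
    _ = _ := by ring

lemma weightedNorm_hermitePoly_le (n : ℕ) :
    weightedNorm (hermitePoly n) ≤ 3 ^ n * hermiteWeight n := by
  induction n with
  | zero =>
    rw [weightedNorm_eq_sum_range _ (by simp [hermitePoly] : (hermitePoly 0).natDegree < 1)]
    simp [hermitePoly, hermiteWeight]
  | succ n ih =>
    have hdeg : (hermitePoly n).natDegree < n + 1 :=
      Nat.lt_succ_of_le (natDegree_hermitePoly_le n)
    have hX := weightedNorm_X_mul_le hdeg
    have hD := weightedNorm_derivative_le hdeg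
    calc weightedNorm (hermitePoly (n + 1))
        ≤ 2 * weightedNorm (X * hermitePoly n) + weightedNorm (derivative (hermitePoly n)) := by
          refine (weightedNorm_sub_le _ _).trans ?_
          rw [weightedNorm_smul, abs_two]
      _ ≤ 3 * √(2 * (n + 1)) * weightedNorm (hermitePoly n) := by push_cast at hX hD; linarith
      _ ≤ 3 * √(2 * (n + 1)) * (3 ^ n * hermiteWeight n) := by gcongr
      _ = 3 ^ (n + 1) * hermiteWeight (n + 1) := by rw [hermiteWeight_succ]; ring

lemma hermiteWeight_le (n : ℕ) : hermiteWeight n ≤ 2 ^ n * √n.factorial := by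
  rw [hermiteWeight, Real.sqrt_le_left (by positivity), mul_pow, Real.sq_sqrt (by positivity),
    ← pow_mul]
  gcongr
  · norm_num
  · omega

theorem abs_hermiteH_le (n : ℕ) (y : ℝ) :
    |hermiteH n y| ≤ 6 ^ n * √n.factorial * Real.exp (y ^ 2 / 4) := by
  rw [hermiteH_eq_eval]
  refine (abs_eval_le_weightedNorm_mul_exp _ y).trans ?_
  gcongr
  calc weightedNorm (hermitePoly n) ≤ 3 ^ n * hermiteWeight n := weightedNorm_hermitePoly_le n
    _ ≤ 3 ^ n * (2 ^ n * √n.factorial) := by gcongr; exact hermiteWeight_le n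
    _ = 6 ^ n * √n.factorial := by rw [← mul_assoc, ← mul_pow]; norm_num

end Hermite

section L2Pairing

variable {α : Type*} [MeasurableSpace α] {μ : Measure α}

lemma integral_conj_mul_eq_inner {f u : α → ℂ} (hf : MemLp f 2 μ) (hu : MemLp u 2 μ) :
    ∫ x, conj (f x) * u x ∂μ = ⟪hf.toLp f, hu.toLp u⟫_ℂ := by
  rw [L2.inner_def]
  refine integral_congr_ae ?_
  filter_upwards [hf.coeFn_toLp, hu.coeFn_toLp] with x hfx hux
  simp [hfx, hux, mul_comm]

lemma integrable_conj_mul {f u : α → ℂ} (hf : MemLp f 2 μ) (hu : MemLp u 2 μ) :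
    Integrable (fun x => conj (f x) * u x) μ := by
  refine (L2.integrable_inner (𝕜 := ℂ) (hf.toLp f) (hu.toLp u)).congr ?_
  filter_upwards [hf.coeFn_toLp, hu.coeFn_toLp] with x hfx hux
  simp [hfx, hux, mul_comm]

lemma norm_integral_conj_mul_le {f u : α → ℂ} (hf : MemLp f 2 μ) (hu : MemLp u 2 μ) :
    ‖∫ x, conj (f x) * u x ∂μ‖ ≤ (eLpNorm f 2 μ).toReal * (eLpNorm u 2 μ).toReal := by
  rw [integral_conj_mul_eq_inner hf hu, ← Lp.norm_toLp f hf, ← Lp.norm_toLp u hu]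
  exact norm_inner_le_norm _ _

theorem tendsto_tsum_mul_integral_conj_mul {a : ℕ → ℂ} {f : ℕ → α → ℂ}
    (hf : ∀ n, MemLp (f n) 2 μ) (ha : Summable fun n => ‖a n‖ * (eLpNorm (f n) 2 μ).toReal)
    {u : ℕ → α → ℂ} {v : α → ℂ} (hu : ∀ k, MemLp (u k) 2 μ) (hv : MemLp v 2 μ)
    (huv : Tendsto (fun k => eLpNorm (u k - v) 2 μ) atTop (𝓝 0)) :
    Tendsto (fun k => ∑' n, a n * ∫ x, conj (f n x) * u k x ∂μ) atTop
      (𝓝 (∑' n, a n * ∫ x, conj (f n x) * v x ∂μ)) := by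
  set S := ∑' n, ‖a n‖ * (eLpNorm (f n) 2 μ).toReal
  have hterm {w : α → ℂ} (hw : MemLp w 2 μ) (n : ℕ) :
      ‖a n * ∫ x, conj (f n x) * w x ∂μ‖
        ≤ ‖a n‖ * (eLpNorm (f n) 2 μ).toReal * (eLpNorm w 2 μ).toReal := by
    rw [norm_mul, mul_assoc]
    exact mul_le_mul_of_nonneg_left (norm_integral_conj_mul_le (hf n) hw) (norm_nonneg _)
  have hsum {w : α → ℂ} (hw : MemLp w 2 μ) :
      Summable fun n => a n * ∫ x, conj (f n x) * w x ∂μ :=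
    .of_norm_bounded (ha.mul_right _) (hterm hw)
  have hsub (k : ℕ) : (∑' n, a n * ∫ x, conj (f n x) * u k x ∂μ)
      - ∑' n, a n * ∫ x, conj (f n x) * v x ∂μ
      = ∑' n, a n * ∫ x, conj (f n x) * (u k - v) x ∂μ := by
    rw [← (hsum (hu k)).tsum_sub (hsum hv)]
    refine tsum_congr fun n => ?_
    rw [← mul_sub, ← integral_sub (integrable_conj_mul (hf n) (hu k))
      (integrable_conj_mul (hf n) hv)]
    simp only [Pi.sub_apply, mul_sub]
  rw [tendsto_iff_norm_sub_tendsto_zero]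
  refine squeeze_zero (fun _ => norm_nonneg _)
    (fun k => (hsub k).symm ▸ tsum_of_norm_bounded (ha.hasSum.mul_right _)
      (hterm ((hu k).sub hv))) ?_
  have hε := (ENNReal.tendsto_toReal_zero_iff fun k => ((hu k).sub hv).eLpNorm_ne_top).mpr huv
  simpa using hε.const_mul S

end L2Pairing

lemma summable_pow_div_sqrt_factorial (r : ℝ) :
    Summable fun n : ℕ => r ^ n / √n.factorial := by
  refine .of_norm_bounded (((Real.summable_pow_div_factorial (2 * r ^ 2)).add
    summable_geometric_two).div_const 2) fun n => ?_
  -- AM-GM with the factors `(√2 |r|)ⁿ / √n!` and `(1/√2)ⁿ`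
  set a := (√2 * |r|) ^ n / √n.factorial with ha_def
  set b := (√2)⁻¹ ^ n with hb_def
  have h2 : (√2 : ℝ) ^ 2 = 2 := Real.sq_sqrt zero_le_two
  have ha : a ^ 2 = (2 * r ^ 2) ^ n / n.factorial := by
    rw [div_pow, Real.sq_sqrt (Nat.cast_nonneg _), ← pow_mul, mul_comm n 2, pow_mul, mul_pow,
      h2, sq_abs]
  have hb : b ^ 2 = (1 / 2) ^ n := by
    rw [← pow_mul, mul_comm n 2, pow_mul, inv_pow, h2, one_div]
  have hab : ‖r ^ n / √n.factorial‖ = a * b := by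
    rw [norm_div, norm_pow, Real.norm_eq_abs, Real.norm_of_nonneg (Real.sqrt_nonneg _), ha_def,
      hb_def, mul_pow, inv_pow]
    field_simp
  rw [hab, ← ha, ← hb]
  linarith [two_mul_le_add_sq a b]

section CoherentSeries

variable {α E F : Type*} [MeasurableSpace α] {μ : Measure α} {p : ENNReal}
  [NormedAddCommGroup E] [NormedAddCommGroup F]

lemma toReal_eLpNorm_le_of_norm_le_mul {f : α → E} {g : α → F} {c : ℝ} (hc : 0 ≤ c)
    (hg : MemLp g p μ) (h : ∀ x, ‖f x‖ ≤ c * ‖g x‖) :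
    (eLpNorm f p μ).toReal ≤ c * (eLpNorm g p μ).toReal := by
  have hle := eLpNorm_le_mul_eLpNorm_of_ae_le_mul (ae_of_all μ h) p
  calc (eLpNorm f p μ).toReal ≤ (ENNReal.ofReal c * eLpNorm g p μ).toReal :=
        ENNReal.toReal_mono (ENNReal.mul_ne_top ENNReal.ofReal_ne_top hg.eLpNorm_ne_top) hle
    _ = c * (eLpNorm g p μ).toReal := by rw [ENNReal.toReal_mul, ENNReal.toReal_ofReal hc]

lemma summable_norm_coherent_mul_toReal_eLpNorm {f : ℕ → α → E} {g : α → F}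
    (hg : MemLp g p μ) {C r : ℝ} (hC : 0 ≤ C) (hr : 0 ≤ r)
    (hf : ∀ n x, ‖f n x‖ ≤ C * r ^ n * ‖g x‖) (z : ℂ) :
    Summable fun n : ℕ => ‖conj z ^ n / (√n.factorial : ℂ)‖ * (eLpNorm (f n) p μ).toReal := by
  refine .of_nonneg_of_le (fun n => by positivity) (fun n => ?_)
    (((summable_pow_div_sqrt_factorial (r * ‖z‖)).mul_left (C * (eLpNorm g p μ).toReal)))
  have hfn := toReal_eLpNorm_le_of_norm_le_mul (by positivity) hg (hf n)
  rw [norm_div, norm_pow, RCLike.norm_conj, Complex.norm_real,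
    Real.norm_of_nonneg (Real.sqrt_nonneg _)]
  calc ‖z‖ ^ n / √n.factorial * (eLpNorm (f n) p μ).toReal
      ≤ ‖z‖ ^ n / √n.factorial * (C * r ^ n * (eLpNorm g p μ).toReal) := by gcongr
    _ = C * (eLpNorm g p μ).toReal * ((r * ‖z‖) ^ n / √n.factorial) := by ring

end CoherentSeries

lemma memLp_two_exp_neg_sq_div_four :
    MemLp (fun x : ℝ => Real.exp (-x ^ 2 / 4)) 2 volume := by
  refine (memLp_two_iff_integrable_sq (by fun_prop)).mpr ?_
  convert integrable_exp_neg_mul_sq (b := 1 / 2) (by norm_num) using 2 with x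
  rw [← Real.exp_nat_mul]
  ring_nf

lemma integral_cosh_smul_comp_sinh {E : Type*} [NormedAddCommGroup E] [NormedSpace ℝ E]
    (G : ℝ → E) : ∫ x, Real.cosh x • G (Real.sinh x) = ∫ s, G s := by
  have h := integral_image_eq_integral_abs_deriv_smul MeasurableSet.univ
    (fun x _ => (Real.hasDerivAt_sinh x).hasDerivWithinAt) Real.sinh_injective.injOn G
  simp only [Set.image_univ, Real.sinh_surjective.range_eq, Measure.restrict_univ] at h
  simp only [h, abs_of_pos (Real.cosh_pos _)]

lemma minusT_sub (g h : ℝ → ℂ) : minusT (g - h) = minusT g - minusT h := by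
  funext s
  simp only [minusT, Pi.sub_apply, sub_mul]

lemma plusT_sub (g h : ℝ → ℂ) : plusT (g - h) = plusT g - plusT h := by
  funext s
  simp only [plusT, Pi.sub_apply, sub_mul, sub_div]

lemma norm_plusT_le_norm_minusT (h : ℝ → ℂ) (s : ℝ) : ‖plusT h s‖ ≤ ‖minusT h s‖ := by
  have hsqrt : 1 ≤ √(1 + s ^ 2) := Real.one_le_sqrt.mpr (by nlinarith)
  simp only [plusT, minusT, norm_div, norm_mul, Complex.norm_real, Real.norm_of_nonneg
    (Real.exp_pos _).le, Real.norm_of_nonneg (Real.sqrt_nonneg _)]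
  calc ‖h (Real.arsinh s)‖ * Real.exp (-s ^ 2 / 2) / √(1 + s ^ 2)
      ≤ ‖h (Real.arsinh s)‖ * Real.exp (-s ^ 2 / 2) := div_le_self (by positivity) hsqrt
    _ ≤ ‖h (Real.arsinh s)‖ * Real.exp (s ^ 2 / 2) := by gcongr; nlinarith

lemma eLpNorm_plusT_le_eLpNorm_minusT (h : ℝ → ℂ) (p : ENNReal) (μ : Measure ℝ) :
    eLpNorm (plusT h) p μ ≤ eLpNorm (minusT h) p μ :=
  eLpNorm_mono (norm_plusT_le_norm_minusT h)

-- the substitution `s = sinh x`, with `ds = cosh x dx` and `√(1 + sinh² x) = cosh x`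
theorem integral_conj_mul_eq_integral_conj_plusT_mul_minusT (h u : ℝ → ℂ) :
    ∫ x, conj (h x) * u x = ∫ s, conj (plusT h s) * minusT u s := by
  symm
  rw [← integral_cosh_smul_comp_sinh]
  congr 1 with x
  have hsqrt : √(1 + Real.sinh x ^ 2) = Real.cosh x := by
    rw [← Real.cosh_arsinh, Real.arsinh_sinh]
  have hexp : (Real.exp (-(Real.sinh x ^ 2 / 2)) : ℂ) * Real.exp (Real.sinh x ^ 2 / 2) = 1 := by
    rw [← Complex.ofReal_mul, ← Real.exp_add, neg_add_cancel, Real.exp_zero,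
      Complex.ofReal_one]
  have hcosh : (Real.cosh x : ℂ) ≠ 0 := Complex.ofReal_ne_zero.mpr (Real.cosh_pos x).ne'
  simp only [plusT, minusT, Real.arsinh_sinh, hsqrt, map_mul, map_div₀, Complex.conj_ofReal,
    Complex.real_smul]
  field_simp
  linear_combination (conj (h x) * u x) * hexp

noncomputable def phiState (N : ℂ) (n : ℕ) : ℝ → ℂ := fun x =>
  N / (2 ^ n * (√n.factorial : ℂ)) * (hermiteH n (Real.sinh x) : ℂ)
    * (Real.exp (-Real.cosh x ^ 2) : ℂ)

noncomputable def psiState (N : ℂ) (n : ℕ) : ℝ → ℂ := fun x =>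
  2 * N / (√n.factorial : ℂ) * (hermiteH n (Real.sinh x) : ℂ) * (Real.cosh x : ℂ)

lemma continuous_phiState (N : ℂ) (n : ℕ) : Continuous (phiState N n) := by
  have := continuous_hermiteH n
  unfold phiState
  fun_prop

lemma norm_phiState_le (N : ℂ) (n : ℕ) (x : ℝ) :
    ‖phiState N n x‖ ≤ ‖N‖ * 3 ^ n * ‖Real.exp (-x ^ 2 / 4)‖ := by
  have hfac : (0 : ℝ) < √n.factorial := Real.sqrt_pos.mpr (by positivity)
  have hx : x ^ 2 ≤ Real.sinh x ^ 2 :=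
    sq_le_sq.mpr (by rw [Real.abs_sinh]; exact Real.self_le_sinh_iff.mpr (abs_nonneg x))
  have hexp : Real.exp (Real.sinh x ^ 2 / 4) * Real.exp (-Real.cosh x ^ 2)
      ≤ Real.exp (-x ^ 2 / 4) := by
    rw [← Real.exp_add, Real.cosh_sq]
    gcongr
    linarith [sq_nonneg x]
  simp only [phiState, norm_mul, norm_div, norm_pow, Complex.norm_real, Complex.norm_ofNat,
    Real.norm_eq_abs, Real.abs_exp, abs_of_pos hfac]
  calc ‖N‖ / (2 ^ n * √n.factorial) * |hermiteH n (Real.sinh x)| * Real.exp (-Real.cosh x ^ 2)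
      ≤ ‖N‖ / (2 ^ n * √n.factorial) * (6 ^ n * √n.factorial * Real.exp (Real.sinh x ^ 2 / 4))
        * Real.exp (-Real.cosh x ^ 2) := by gcongr; exact abs_hermiteH_le n _
    _ = ‖N‖ * 3 ^ n * (Real.exp (Real.sinh x ^ 2 / 4) * Real.exp (-Real.cosh x ^ 2)) := by
        rw [show (6 : ℝ) ^ n = 2 ^ n * 3 ^ n by rw [← mul_pow]; norm_num]
        field_simp
    _ ≤ ‖N‖ * 3 ^ n * Real.exp (-x ^ 2 / 4) := by gcongr

lemma plusT_psiState (N : ℂ) (n : ℕ) :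
    plusT (psiState N n) = fun s =>
      2 * N / (√n.factorial : ℂ) * (hermiteH n s : ℂ) * (Real.exp (-s ^ 2 / 2) : ℂ) := by
  funext s
  have hsqrt : (√(1 + s ^ 2) : ℂ) ≠ 0 :=
    Complex.ofReal_ne_zero.mpr (Real.sqrt_pos.mpr (by positivity)).ne'
  simp only [plusT, psiState, Real.sinh_arsinh, Real.cosh_arsinh]
  field_simp

lemma norm_plusT_psiState_le (N : ℂ) (n : ℕ) (s : ℝ) :
    ‖plusT (psiState N n) s‖ ≤ 2 * ‖N‖ * 6 ^ n * ‖Real.exp (-s ^ 2 / 4)‖ := by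
  have hfac : (0 : ℝ) < √n.factorial := Real.sqrt_pos.mpr (by positivity)
  simp only [plusT_psiState, norm_mul, norm_div, Complex.norm_real, Complex.norm_ofNat,
    Real.norm_eq_abs, Real.abs_exp, abs_of_pos hfac]
  calc 2 * ‖N‖ / √n.factorial * |hermiteH n s| * Real.exp (-s ^ 2 / 2)
      ≤ 2 * ‖N‖ / √n.factorial * (6 ^ n * √n.factorial * Real.exp (s ^ 2 / 4))
        * Real.exp (-s ^ 2 / 2) := by gcongr; exact abs_hermiteH_le n s
    _ = 2 * ‖N‖ * 6 ^ n * Real.exp (-s ^ 2 / 4) := by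
        field_simp
        rw [mul_assoc, ← Real.exp_add]
        ring_nf

lemma memLp_phiState (N : ℂ) (n : ℕ) : MemLp (phiState N n) 2 volume :=
  memLp_two_exp_neg_sq_div_four.of_le_mul (continuous_phiState N n).aestronglyMeasurable
    (ae_of_all _ (norm_phiState_le N n))

lemma memLp_plusT_psiState (N : ℂ) (n : ℕ) : MemLp (plusT (psiState N n)) 2 volume := by
  have hcont : Continuous (plusT (psiState N n)) := by
    have := continuous_hermiteH n
    rw [plusT_psiState]
    fun_prop
  exact memLp_two_exp_neg_sq_div_four.of_le_mul hcont.aestronglyMeasurable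
    (ae_of_all _ (norm_plusT_psiState_le N n))

end BiCoherent

open BiCoherent

/-- the weak bi-coherent state functionals `F_Φ(z)` and `F_Ψ(z)`
are `τ_{E_c}`-continuous linear functionals on `E_c`. -/
theorem stmt16 (Nφ Nψ : ℂ)
    (φ ψ : ℕ → ℝ → ℂ)
    (hφdef : ∀ n : ℕ, φ n = fun x =>
      Nφ / ((2 : ℂ) ^ n * (Real.sqrt n.factorial : ℂ))
        * (hermiteH n (Real.sinh x) : ℂ) * (Real.exp (-(Real.cosh x) ^ 2) : ℂ))
    (hψdef : ∀ n : ℕ, ψ n = fun x =>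
      2 * Nψ / (Real.sqrt n.factorial : ℂ)
        * (hermiteH n (Real.sinh x) : ℂ) * (Real.cosh x : ℂ))
    (FΦ FΨ : ℂ → (ℝ → ℂ) → ℂ)
    (hFΦ : ∀ (z : ℂ) (h : ℝ → ℂ), FΦ z h = (Real.exp (-‖z‖ ^ 2 / 2) : ℂ)
      * ∑' n : ℕ, ((starRingEnd ℂ) z) ^ n / (Real.sqrt n.factorial : ℂ)
          * ∫ x : ℝ, (starRingEnd ℂ) (φ n x) * h x)
    (hFΨ : ∀ (z : ℂ) (h : ℝ → ℂ), FΨ z h = (Real.exp (-‖z‖ ^ 2 / 2) : ℂ)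
      * ∑' n : ℕ, ((starRingEnd ℂ) z) ^ n / (Real.sqrt n.factorial : ℂ)
          * ∫ x : ℝ, (starRingEnd ℂ) (ψ n x) * h x) :
    ∀ (g : ℕ → ℝ → ℂ) (glim : ℝ → ℂ),
      (∀ k : ℕ, g k ∈ Ec) → glim ∈ Ec →
      Tendsto (fun k : ℕ => eLpNorm (g k - glim) 2 (volume : Measure ℝ)) atTop (nhds 0) →
      Tendsto (fun k : ℕ => eLpNorm (minusT (g k) - minusT glim) 2 (volume : Measure ℝ))
        atTop (nhds 0) →
      (∀ z : ℂ, Tendsto (fun k : ℕ => FΦ z (g k)) atTop (nhds (FΦ z glim))) ∧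
      (∀ z : ℂ, Tendsto (fun k : ℕ => FΨ z (g k)) atTop (nhds (FΨ z glim))) ∧
      (∀ k : ℕ, eLpNorm (plusT (g k) - plusT glim) 2 (volume : Measure ℝ)
        ≤ eLpNorm (minusT (g k) - minusT glim) 2 (volume : Measure ℝ)) ∧
      Tendsto (fun k : ℕ => eLpNorm (plusT (g k) - plusT glim) 2 (volume : Measure ℝ))
        atTop (nhds 0) := by
  intro g glim hg hglim hL2 hminus
  obtain rfl : φ = phiState Nφ := funext hφdef
  obtain rfl : ψ = psiState Nψ := funext hψdef
  have hplus (k : ℕ) : eLpNorm (plusT (g k) - plusT glim) 2 volume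
      ≤ eLpNorm (minusT (g k) - minusT glim) 2 volume := by
    rw [← plusT_sub, ← minusT_sub]
    exact eLpNorm_plusT_le_eLpNorm_minusT _ _ _
  refine ⟨fun z => ?_, fun z => ?_, hplus, ?_⟩
  · simp only [hFΦ]
    exact (tendsto_tsum_mul_integral_conj_mul (memLp_phiState Nφ)
      (summable_norm_coherent_mul_toReal_eLpNorm memLp_two_exp_neg_sq_div_four (norm_nonneg _)
        (by norm_num) (norm_phiState_le Nφ) z)
      (fun k => (hg k).1) hglim.1 hL2).const_mul _
  · simp only [hFΨ, integral_conj_mul_eq_integral_conj_plusT_mul_minusT (psiState Nψ _)]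
    exact (tendsto_tsum_mul_integral_conj_mul (memLp_plusT_psiState Nψ)
      (summable_norm_coherent_mul_toReal_eLpNorm memLp_two_exp_neg_sq_div_four
        (by positivity) (by norm_num) (norm_plusT_psiState_le Nψ) z)
      (fun k => (hg k).2) hglim.2 hminus).const_mul _
  · exact tendsto_of_tendsto_of_tendsto_of_le_of_le tendsto_const_nhds hminus
      (fun _ => zero_le) hplus
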